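/- The class REG/2(⊙) of languages over {0,1} recognized by a deterministic finite automaton with at most 2 inkdots of (deterministic) advice is strictly contained in the class REG/R2(⊙) of languages recognized with bounded error by a deterministic finite automaton with randomized advice of at most 2 inkdots: REG/2(⊙) ⊆ REG/R2(⊙), and the language L_3 = { 0^m 1^m 0^m 1^m : m > 0 } is in REG/R2(⊙) but not in REG/2(⊙). -/

import Mathlib

/-- The marked word: the i-th symbol of `w` becomes `(w_i, true)` if `i ∈ S`,
and `(w_i, false)` otherwise. -/
def markWord {α : Type*} (w : List α) (S : Finset ℕ) : List (α × Bool) :=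
  w.zipIdx.map (fun p => (p.1, decide (p.2 ∈ S)))

/-- `L` is recognized by a deterministic finite automaton with at most `a n`
inkdots of advice on inputs of length `n`. -/
def RecognizedWithInkdots {α : Type*} (L : Set (List α)) (a : ℕ → ℕ) : Prop :=
  ∃ (σ : Type) (_ : Fintype σ) (M : DFA (α × Bool) σ) (h : ℕ → Finset ℕ),
    (∀ n, ∀ i ∈ h n, i < n) ∧
    (∀ n, (h n).card ≤ a n) ∧
    (∀ w : List α, w ∈ L ↔ markWord w (h w.length) ∈ M.accepts)

open scoped Classical in
/-- `L` is recognized with bounded error by a dfa with randomized advice of at most `k`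
inkdots: for each input length `n` there is a finitely supported probability
distribution `D n` over inkdot patterns (sets of at most `k` positions in
`{0,…,n-1}`), such that members are accepted with probability at least `2/3` and
non-members are rejected with probability at least `2/3`. -/
def RecognizedWithRandomInkdots {α : Type*} (L : Set (List α)) (k : ℕ) : Prop :=
  ∃ (σ : Type) (_ : Fintype σ) (M : DFA (α × Bool) σ) (D : ℕ → (Finset ℕ →₀ NNReal)),
    (∀ n, (∑ S ∈ (D n).support, D n S) = 1) ∧
    (∀ n, ∀ S ∈ (D n).support, (∀ i ∈ S, i < n) ∧ S.card ≤ k) ∧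
    (∀ w : List α,
      (w ∈ L → (2 / 3 : NNReal) ≤ ∑ S ∈ (D w.length).support,
          (if markWord w S ∈ M.accepts then D w.length S else 0)) ∧
      (w ∉ L → (2 / 3 : NNReal) ≤ ∑ S ∈ (D w.length).support,
          (if markWord w S ∈ M.accepts then 0 else D w.length S)))

/-- The language `L_3 = { 0^m 1^m 0^m 1^m : m > 0 }` (`false` plays the role of `0`
and `true` the role of `1`). -/
def L3 : Set (List Bool) :=
  { w | ∃ m : ℕ, 0 < m ∧
      w = List.replicate m false ++ List.replicate m true ++
          List.replicate m false ++ List.replicate m true }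

/-!
Deterministic advice is randomized advice concentrated on a single inkdot pattern.

For `L₃`, on inputs of length `4m` the random advice inks two of the three block boundaries
`m, 2m, 3m`, each of the three pairs with probability `1/3`. The automaton accepts a marked word
iff it has the shape `0⁺1⁺0⁺1⁺` and carries exactly two inkdots, both on first letters of
blocks. A member is accepted under every pair. Two different pairs cover all three boundaries,
so a word accepted under two of them has its blocks starting at `m, 2m, 3m` and lies in `L₃`;
hence a non-member is rejected with probability at least `2/3`.

With two deterministic inkdots on `0ᵐ1ᵐ0ᵐ1ᵐ`, for large `m` one of the three block boundaries
is far from both inkdots. Every letter acts on the finitely many states eventually periodically,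
with a common period `p`, so moving that boundary by `p` does not change acceptance, although
the resulting word of the same length is not in `L₃`.
-/

theorem List.replicate_append_cons_inj {α : Type*} {x y : α} (hxy : x ≠ y) {a a' : ℕ}
    {u u' : List α} (h : List.replicate a x ++ y :: u = List.replicate a' x ++ y :: u') :
    a = a' ∧ u = u' := by
  induction a generalizing a' with
  | zero => cases a' <;> simp_all [List.replicate_succ, eq_comm]
  | succ a ih =>
    cases a' with
    | zero => simp_all [List.replicate_succ]
    | succ a' =>
      simp only [List.replicate_succ, List.cons_append, List.cons.injEq, true_and] at h
      exact (ih h).imp_left (congrArg (· + 1))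

theorem Finset.card_eq_sum_toNat_decide_mem {S B : Finset ℕ} (hSB : S ⊆ B) :
    S.card = ∑ i ∈ B, (decide (i ∈ S)).toNat := by
  calc S.card = (B.filter (· ∈ S)).card := by
        rw [Finset.filter_mem_eq_inter, Finset.inter_eq_right.mpr hSB]
    _ = ∑ i ∈ B, (decide (i ∈ S)).toNat := by
        rw [Finset.card_filter]
        exact Finset.sum_congr rfl fun i _ => by by_cases h : i ∈ S <;> simp [h]

theorem Finset.union_eq_of_mem_powersetCard {α : Type*} [DecidableEq α] {s T T' : Finset α}
    {k : ℕ} (hs : s.card = k + 1) (hT : T ∈ s.powersetCard k) (hT' : T' ∈ s.powersetCard k)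
    (hne : T ≠ T') : T ∪ T' = s := by
  rw [Finset.mem_powersetCard] at hT hT'
  by_contra h
  have hlt : (T ∪ T').card < s.card :=
    Finset.card_lt_card (Finset.ssubset_iff_subset_ne.mpr ⟨Finset.union_subset hT.1 hT'.1, h⟩)
  have h₁ : T = T ∪ T' := Finset.eq_of_subset_of_card_le Finset.subset_union_left (by omega)
  have h₂ : T' = T ∪ T' := Finset.eq_of_subset_of_card_le Finset.subset_union_right (by omega)
  exact hne (h₁.trans h₂.symm)

section Marking

variable {α : Type*}

def markWordFrom (k : ℕ) (w : List α) (S : Finset ℕ) : List (α × Bool) :=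
  (w.zipIdx k).map fun p => (p.1, decide (p.2 ∈ S))

theorem markWord_eq_markWordFrom (w : List α) (S : Finset ℕ) :
    markWord w S = markWordFrom 0 w S := rfl

theorem markWordFrom_cons (k : ℕ) (x : α) (w : List α) (S : Finset ℕ) :
    markWordFrom k (x :: w) S = (x, decide (k ∈ S)) :: markWordFrom (k + 1) w S := rfl

theorem markWordFrom_append (k : ℕ) (u v : List α) (S : Finset ℕ) :
    markWordFrom k (u ++ v) S = markWordFrom k u S ++ markWordFrom (k + u.length) v S := by
  simp [markWordFrom, List.zipIdx_append]

theorem markWordFrom_eq_map {k : ℕ} {w : List α} {S : Finset ℕ}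
    (hS : ∀ i ∈ S, i < k ∨ k + w.length ≤ i) :
    markWordFrom k w S = w.map fun x => (x, false) := by
  refine List.ext_getElem (by simp [markWordFrom]) fun i h₁ h₂ => ?_
  have : k + i ∉ S := fun hi => by have := hS _ hi; simp at h₂; omega
  simp [markWordFrom, List.getElem_zipIdx, this]

theorem markWordFrom_cons_replicate {k n : ℕ} {S : Finset ℕ} {x : α}
    (hS : ∀ i ∈ S, i ≤ k ∨ k + n < i) :
    markWordFrom k (x :: List.replicate n x) S =
      (x, decide (k ∈ S)) :: List.replicate n (x, false) := by
  rw [markWordFrom_cons, markWordFrom_eq_map fun i hi => by simp; have := hS i hi; omega]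
  simp

theorem markWord_append (u v : List α) (S : Finset ℕ) :
    markWord (u ++ v) S = markWord u S ++ markWordFrom u.length v S := by
  simp [markWord_eq_markWordFrom, markWordFrom_append]

theorem markWord_append_append_of_forall_notMem {P W Q : List α} {S : Finset ℕ}
    (hS : ∀ i ∈ S, i < P.length ∨ P.length + W.length ≤ i) :
    markWord (P ++ W ++ Q) S =
      markWord P S ++ W.map (fun x => (x, false)) ++ markWordFrom (P.length + W.length) Q S := by
  rw [markWord_append, markWord_append, markWordFrom_eq_map hS, List.length_append]

theorem map_fst_markWord (w : List α) (S : Finset ℕ) : (markWord w S).map Prod.fst = w := by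
  simp [markWord, Function.comp_def]

theorem markWord_eq_markWord_iff {w : List α} {S T : Finset ℕ} :
    markWord w S = markWord w T ↔ ∀ i < w.length, (i ∈ S ↔ i ∈ T) := by
  constructor
  · intro h i hi
    have := congrArg (fun l => (l[i]?).map Prod.snd) h
    simpa [markWord, hi] using this
  · intro h
    refine List.ext_getElem (by simp [markWord]) fun i h₁ _ => ?_
    simp only [markWord, List.length_map, List.length_zipIdx] at h₁
    simp [markWord, List.getElem_zipIdx, h i h₁]

theorem markWord_append_singleton (w : List α) (x : α) (S : Finset ℕ) :
    markWord (w ++ [x]) S = markWord w S ++ [(x, decide (w.length ∈ S))] := by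
  simp [markWord_append, markWordFrom]

theorem markWord_append_singleton_of_notMem {w : List α} {S : Finset ℕ} (h : w.length ∉ S)
    (x : α) : markWord (w ++ [x]) S = markWord w S ++ [(x, false)] := by
  simp [markWord_append_singleton, h]

theorem markWord_append_singleton_insert (w : List α) (S : Finset ℕ) (x : α) :
    markWord (w ++ [x]) (insert w.length S) = markWord w S ++ [(x, true)] := by
  have : markWord w (insert w.length S) = markWord w S :=
    markWord_eq_markWord_iff.mpr fun i hi => by simp [hi.ne]
  simp [markWord_append_singleton, this]

end Marking

section UniformAdvice

open scoped Classical

noncomputable def uniformAdvice (s : Finset (Finset ℕ)) : Finset ℕ →₀ NNReal :=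
  Finsupp.onFinset s (fun S => if S ∈ s then (s.card : NNReal)⁻¹ else 0) fun S h => by
    by_contra hS
    simp [hS] at h

theorem support_uniformAdvice {s : Finset (Finset ℕ)} (hs : s.Nonempty) :
    (uniformAdvice s).support = s := by
  ext S
  simp [uniformAdvice, hs.card_pos.ne']

theorem sum_ite_uniformAdvice {s : Finset (Finset ℕ)} (hs : s.Nonempty) (P : Finset ℕ → Prop)
    [DecidablePred P] :
    ∑ S ∈ (uniformAdvice s).support, (if P S then uniformAdvice s S else 0) =
      (s.filter P).card / s.card := by
  rw [support_uniformAdvice hs, ← Finset.sum_filter]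
  have : ∀ S ∈ s.filter P, uniformAdvice s S = (s.card : NNReal)⁻¹ := fun S hS => by
    simp [uniformAdvice, (Finset.mem_filter.mp hS).1]
  rw [Finset.sum_congr rfl this, Finset.sum_const, nsmul_eq_mul, div_eq_mul_inv]

theorem recognizedWithRandomInkdots_of_uniformAdvice {α : Type*} {σ : Type} [Fintype σ]
    {L : Set (List α)} {k : ℕ} (M : DFA (α × Bool) σ) (advice : ℕ → Finset (Finset ℕ))
    (hne : ∀ n, (advice n).Nonempty)
    (hadvice : ∀ n, ∀ S ∈ advice n, (∀ i ∈ S, i < n) ∧ S.card ≤ k)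
    (hmajority : ∀ w : List α, 2 * (advice w.length).card ≤
      3 * ((advice w.length).filter fun S => (markWord w S ∈ M.accepts ↔ w ∈ L)).card) :
    RecognizedWithRandomInkdots L k := by
  have two_thirds_le : ∀ (w : List α) (P : Finset ℕ → Prop) [DecidablePred P],
      (∀ S, P S ↔ (markWord w S ∈ M.accepts ↔ w ∈ L)) →
      2 / 3 ≤ ∑ S ∈ (uniformAdvice (advice w.length)).support,
        (if P S then uniformAdvice (advice w.length) S else 0) := by
    intro w P _ hP
    rw [sum_ite_uniformAdvice (hne _), le_div_iff₀ (by exact_mod_cast (hne _).card_pos),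
      div_mul_eq_mul_div, div_le_iff₀ (by norm_num), Finset.filter_congr fun S _ => hP S]
    rw [mul_comm _ (3 : NNReal)]
    exact_mod_cast hmajority w
  refine ⟨σ, inferInstance, M, fun n => uniformAdvice (advice n), fun n => ?_,
    fun n S hS => hadvice n S (support_uniformAdvice (hne n) ▸ hS), fun w => ⟨fun hw => ?_,
    fun hw => ?_⟩⟩
  · simpa [(hne n).card_pos.ne'] using sum_ite_uniformAdvice (hne n) fun _ => True
  · exact two_thirds_le w _ fun S => by simp [hw]
  · simp only [← ite_not (markWord w _ ∈ M.accepts)]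
    exact two_thirds_le w _ fun S => by simp [hw]

theorem RecognizedWithInkdots.recognizedWithRandomInkdots {α : Type*} {L : Set (List α)}
    {k : ℕ} (h : RecognizedWithInkdots L fun _ => k) : RecognizedWithRandomInkdots L k := by
  obtain ⟨σ, _, M, advice, hlt, hcard, hL⟩ := h
  refine recognizedWithRandomInkdots_of_uniformAdvice M (fun n => {advice n})
    (fun n => Finset.singleton_nonempty _) (fun n S hS => ?_) fun w => ?_
  · rw [Finset.mem_singleton.mp hS]
    exact ⟨hlt n, hcard n⟩
  · simp [Finset.filter_singleton, hL w]

end UniformAdvice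

theorem Function.exists_iterate_add_eq_iterate {ι α : Type*} [Finite ι] [Finite α]
    (g : ι → α → α) : ∃ N p, 0 < p ∧ ∀ i n, N ≤ n → (g i)^[n + p] = (g i)^[n] := by
  obtain ⟨a, b, hab, h⟩ := Finite.exists_ne_map_eq_of_infinite fun n i => (g i)^[n]
  wlog hlt : a < b generalizing a b
  · exact this b a hab.symm h.symm (by omega)
  refine ⟨a, b - a, by omega, fun i n hn => ?_⟩
  have hi : (g i)^[a] = (g i)^[b] := congrFun h i
  calc (g i)^[n + (b - a)] = (g i)^[n - a] ∘ (g i)^[b] := by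
        rw [← Function.iterate_add]; congr 1; omega
    _ = (g i)^[n - a] ∘ (g i)^[a] := by rw [hi]
    _ = (g i)^[n] := by rw [← Function.iterate_add]; congr 1; omega

namespace DFA

variable {α σ : Type*}

theorem evalFrom_replicate (M : DFA α σ) (x : α) (n : ℕ) (q : σ) :
    M.evalFrom q (List.replicate n x) = (fun q => M.step q x)^[n] q := by
  induction n generalizing q with
  | zero => rfl
  | succ n ih => exact ih (M.step q x)

theorem exists_evalFrom_replicate_add_eq [Finite α] [Finite σ] (M : DFA α σ) :
    ∃ N p, 0 < p ∧ ∀ x n q, N ≤ n →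
      M.evalFrom q (List.replicate (n + p) x) = M.evalFrom q (List.replicate n x) := by
  obtain ⟨N, p, hp, h⟩ := Function.exists_iterate_add_eq_iterate fun x q => M.step q x
  exact ⟨N, p, hp, fun x n q hn => by simp only [evalFrom_replicate, h x n hn]⟩

theorem exists_evalFrom_shift_eq [Finite α] [Finite σ] (M : DFA α σ) :
    ∃ r p, 0 < p ∧ p ≤ r ∧ ∀ x y q,
      M.evalFrom q (List.replicate (r + p) x ++ List.replicate (r - p) y) =
        M.evalFrom q (List.replicate r x ++ List.replicate r y) := by
  obtain ⟨N, p, hp, hN⟩ := M.exists_evalFrom_replicate_add_eq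
  refine ⟨N + p, p, hp, by omega, fun x y q => ?_⟩
  rw [evalFrom_of_append, evalFrom_of_append, hN x _ q (by omega),
    ← hN y (N + p - p) _ (by omega), Nat.sub_add_cancel (by omega)]

end DFA

theorem DFA.exists_shift_mem_accepts_iff {α σ : Type*} [Finite α] [Finite σ]
    (M : DFA (α × Bool) σ) :
    ∃ r p, 0 < p ∧ p ≤ r ∧ ∀ (u v : List α) (x y : α) (a b : ℕ) (S : Finset ℕ),
      r ≤ a → r ≤ b → (∀ i ∈ S, i + r < u.length + a ∨ u.length + a + r ≤ i) →
      (markWord (u ++ List.replicate (a + p) x ++ List.replicate (b - p) y ++ v) S ∈ M.accepts ↔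
        markWord (u ++ List.replicate a x ++ List.replicate b y ++ v) S ∈ M.accepts) := by
  obtain ⟨r, p, hp, hpr, hM⟩ := M.exists_evalFrom_shift_eq
  refine ⟨r, p, hp, hpr, fun u v x y a b S ha hb hS => ?_⟩
  have replicate_split : ∀ (z : α) {n k l : ℕ}, n = k + l →
      List.replicate n z = List.replicate k z ++ List.replicate l z := fun z n k l h => by
    rw [h, List.replicate_add]
  have hshifted : u ++ List.replicate (a + p) x ++ List.replicate (b - p) y ++ v =
      (u ++ List.replicate (a - r) x) ++ (List.replicate (r + p) x ++ List.replicate (r - p) y) ++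
        (List.replicate (b - r) y ++ v) := by
    rw [replicate_split x (show a + p = a - r + (r + p) by omega),
      replicate_split y (show b - p = r - p + (b - r) by omega)]
    simp only [List.append_assoc]
  have horiginal : u ++ List.replicate a x ++ List.replicate b y ++ v =
      (u ++ List.replicate (a - r) x) ++ (List.replicate r x ++ List.replicate r y) ++
        (List.replicate (b - r) y ++ v) := by
    rw [replicate_split x (show a = a - r + r by omega),
      replicate_split y (show b = r + (b - r) by omega)]
    simp only [List.append_assoc]
  rw [hshifted, horiginal,
    markWord_append_append_of_forall_notMem fun i hi => by have := hS i hi; simp; omega,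
    markWord_append_append_of_forall_notMem fun i hi => by have := hS i hi; simp; omega]
  have hmiddle : ∀ q, M.evalFrom q
      ((List.replicate (r + p) x ++ List.replicate (r - p) y).map fun z => (z, false)) =
      M.evalFrom q ((List.replicate r x ++ List.replicate r y).map fun z => (z, false)) :=
    fun q => by simpa only [List.map_append, List.map_replicate] using hM (x, false) (y, false) q
  simp only [DFA.mem_accepts, DFA.eval, DFA.evalFrom_of_append, hmiddle, List.length_append,
    List.length_replicate]
  rw [show r + p + (r - p) = r + r by omega]

def blockWord (a b c d : ℕ) : List Bool :=
  List.replicate a false ++ List.replicate b true ++ List.replicate c false ++ List.replicate d true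

-- Listed from the last boundary down: the order in which `insert` adds them during a left to
-- right scan.
def blockBoundaries (a b c : ℕ) : Finset ℕ := {a + b + c, a + b, a}

@[simp]
theorem length_blockWord (a b c d : ℕ) : (blockWord a b c d).length = a + b + c + d := by
  simp [blockWord, Nat.add_assoc]

theorem card_blockBoundaries {a b c : ℕ} (hb : 0 < b) (hc : 0 < c) :
    (blockBoundaries a b c).card = 3 :=
  Finset.card_eq_three.mpr ⟨_, _, _, by omega, by omega, by omega, rfl⟩

theorem blockWord_succ (a b c d : ℕ) : blockWord a (b + 1) (c + 1) (d + 1) =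
    List.replicate a false ++ true :: (List.replicate b true ++ false ::
      (List.replicate c false ++ true :: List.replicate d true)) := by
  simp [blockWord, List.replicate_succ]

theorem blockWord_injective {a b c d a' b' c' d' : ℕ} (hb : 0 < b) (hc : 0 < c) (hd : 0 < d)
    (hb' : 0 < b') (hc' : 0 < c') (hd' : 0 < d')
    (h : blockWord a b c d = blockWord a' b' c' d') : a = a' ∧ b = b' ∧ c = c' ∧ d = d' := by
  obtain ⟨b, rfl⟩ := Nat.exists_eq_add_one.mpr hb
  obtain ⟨c, rfl⟩ := Nat.exists_eq_add_one.mpr hc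
  obtain ⟨d, rfl⟩ := Nat.exists_eq_add_one.mpr hd
  obtain ⟨b', rfl⟩ := Nat.exists_eq_add_one.mpr hb'
  obtain ⟨c', rfl⟩ := Nat.exists_eq_add_one.mpr hc'
  obtain ⟨d', rfl⟩ := Nat.exists_eq_add_one.mpr hd'
  rw [blockWord_succ, blockWord_succ] at h
  obtain ⟨rfl, h₁⟩ := List.replicate_append_cons_inj (by decide) h
  obtain ⟨rfl, h₂⟩ := List.replicate_append_cons_inj (by decide) h₁
  obtain ⟨rfl, h₃⟩ := List.replicate_append_cons_inj (by decide) h₂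
  simpa using congrArg List.length h₃

theorem eq_of_blockWord_mem_L3 {a b c d : ℕ} (hb : 0 < b) (hc : 0 < c) (hd : 0 < d)
    (h : blockWord a b c d ∈ L3) : a = b ∧ b = c ∧ c = d := by
  obtain ⟨m, hm, h⟩ := h
  obtain ⟨rfl, rfl, rfl, rfl⟩ := blockWord_injective hb hc hd hm hm hm h
  exact ⟨rfl, rfl, rfl⟩

theorem exists_boundary_far_from {S : Finset ℕ} (hS : S.card ≤ 2) {m r : ℕ} (hr : 2 * r ≤ m) :
    ∃ j ∈ ({1, 2, 3} : Finset ℕ), ∀ i ∈ S, i + r < j * m ∨ j * m + r ≤ i := by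
  by_contra! h
  obtain ⟨i₁, hi₁, hi₁'⟩ := h 1 (by simp)
  obtain ⟨i₂, hi₂, hi₂'⟩ := h 2 (by simp)
  obtain ⟨i₃, hi₃, hi₃'⟩ := h 3 (by simp)
  have hsub : {i₁, i₂, i₃} ⊆ S := by simp [Finset.insert_subset_iff, hi₁, hi₂, hi₃]
  have hcard : ({i₁, i₂, i₃} : Finset ℕ).card = 3 :=
    Finset.card_eq_three.mpr ⟨i₁, i₂, i₃, by omega, by omega, by omega, rfl⟩
  have := Finset.card_le_card hsub
  omega

theorem L3_not_recognizedWithInkdots : ¬ RecognizedWithInkdots L3 fun _ => 2 := by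
  rintro ⟨σ, _, M, advice, -, hcard, hL⟩
  obtain ⟨r, p, hp, hpr, hshift⟩ := M.exists_shift_mem_accepts_iff
  set m := 2 * r + 1
  set S := advice (4 * m)
  have accepts_iff : ∀ {a b c d : ℕ}, a + b + c + d = 4 * m →
      (markWord (blockWord a b c d) S ∈ M.accepts ↔ blockWord a b c d ∈ L3) := fun h => by
    rw [hL, length_blockWord, h]
  have hmem : markWord (blockWord m m m m) S ∈ M.accepts :=
    (accepts_iff (by omega)).2 ⟨m, by omega, rfl⟩
  have shift_breaks : ∀ (u v : List Bool) (x y : Bool) {a b c d : ℕ},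
      (∀ i ∈ S, i + r < u.length + m ∨ u.length + m + r ≤ i) →
      u ++ List.replicate m x ++ List.replicate m y ++ v = blockWord m m m m →
      u ++ List.replicate (m + p) x ++ List.replicate (m - p) y ++ v = blockWord a b c d →
      a + b + c + d = 4 * m → 0 < b → 0 < c → 0 < d → a = b ∧ b = c ∧ c = d := by
    intro u v x y a b c d hfree hw hw' hlen hb hc hd
    refine eq_of_blockWord_mem_L3 hb hc hd ((accepts_iff hlen).1 ?_)
    rwa [← hw', hshift u v x y m m S (by omega) (by omega) hfree, hw]
  obtain ⟨j, hj, hfree⟩ := exists_boundary_far_from (hcard _) (show 2 * r ≤ m by omega)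
  simp only [Finset.mem_insert, Finset.mem_singleton] at hj
  rcases hj with rfl | rfl | rfl
  · have := shift_breaks [] (List.replicate m false ++ List.replicate m true) false true
      (a := m + p) (b := m - p) (c := m) (d := m) (by simpa using hfree)
      (by simp [blockWord]) (by simp [blockWord]) (by omega) (by omega) (by omega) (by omega)
    omega
  · have := shift_breaks (List.replicate m false) (List.replicate m true) true false
      (a := m) (b := m + p) (c := m - p) (d := m) (by simpa [two_mul] using hfree)
      (by simp [blockWord]) (by simp [blockWord]) (by omega) (by omega) (by omega) (by omega)
    omega
  · have := shift_breaks (List.replicate m false ++ List.replicate m true) [] false true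
      (a := m) (b := m) (c := m + p) (d := m - p)
      (by simpa [show 3 * m = m + m + m by ring] using hfree)
      (by simp [blockWord]) (by simp [blockWord]) (by omega) (by omega) (by omega) (by omega)
    omega

def IsInkdotMarking {α : Type*} (u : List (α × Bool)) (w : List α) (B : Finset ℕ) (j : ℕ) :
    Prop :=
  ∃ S ⊆ B, S.card = j ∧ u = markWord w S

namespace IsInkdotMarking

variable {α : Type*} {u : List (α × Bool)} {w : List α} {B : Finset ℕ} {j : ℕ}

theorem append_singleton (h : IsInkdotMarking u w B j) (hB : ∀ i ∈ B, i < w.length) (x : α) :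
    IsInkdotMarking (u ++ [(x, false)]) (w ++ [x]) B j := by
  obtain ⟨S, hSB, hcard, rfl⟩ := h
  have hS : w.length ∉ S := fun h => (hB _ (hSB h)).false
  exact ⟨S, hSB, hcard, (markWord_append_singleton_of_notMem hS x).symm⟩

theorem append_singleton_insert (h : IsInkdotMarking u w B j) (hB : ∀ i ∈ B, i < w.length)
    (x : α) (e : Bool) :
    IsInkdotMarking (u ++ [(x, e)]) (w ++ [x]) (insert w.length B) (j + e.toNat) := by
  obtain ⟨S, hSB, hcard, rfl⟩ := h
  have hS : w.length ∉ S := fun h => (hB _ (hSB h)).false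
  cases e
  · exact ⟨S, hSB.trans (Finset.subset_insert _ _), hcard,
      (markWord_append_singleton_of_notMem hS x).symm⟩
  · exact ⟨insert w.length S, Finset.insert_subset_insert _ hSB,
      by simp [Finset.card_insert_of_notMem hS, hcard],
      (markWord_append_singleton_insert w S x).symm⟩

end IsInkdotMarking

-- `Xⱼ`: reading block `X` (`A` to `D`) of a word `0⁺1⁺0⁺1⁺`, with `j` inkdots seen so far, each
-- on the first letter of one of the blocks `B`, `C`, `D`.
inductive L3State
  | start | dead | A | B₀ | B₁ | C₀ | C₁ | C₂ | D₀ | D₁ | D₂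
  deriving DecidableEq

namespace L3State

instance : Fintype L3State :=
  ⟨{start, dead, A, B₀, B₁, C₀, C₁, C₂, D₀, D₁, D₂}, fun q => by cases q <;> simp⟩

def step : L3State → Bool × Bool → L3State
  | start, (false, false) => A
  | A, (false, false) => A
  | A, (true, false) => B₀
  | A, (true, true) => B₁
  | B₀, (true, false) => B₀
  | B₀, (false, false) => C₀
  | B₀, (false, true) => C₁
  | B₁, (true, false) => B₁
  | B₁, (false, false) => C₁
  | B₁, (false, true) => C₂
  | C₀, (false, false) => C₀
  | C₀, (true, false) => D₀
  | C₀, (true, true) => D₁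
  | C₁, (false, false) => C₁
  | C₁, (true, false) => D₁
  | C₁, (true, true) => D₂
  | C₂, (false, false) => C₂
  | C₂, (true, false) => D₂
  | D₀, (true, false) => D₀
  | D₁, (true, false) => D₁
  | D₂, (true, false) => D₂
  | _, _ => dead

theorem step_step_of_same_letter (q : L3State) (x e : Bool) :
    step (step q (x, e)) (x, false) = step q (x, e) := by
  revert q x e; decide

theorem step_blocks_eq_D₂ (e₁ e₂ e₃ : Bool) (h : e₁.toNat + e₂.toNat + e₃.toNat = 2) :
    step (step (step (step start (false, false)) (true, e₁)) (false, e₂)) (true, e₃) = D₂ := by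
  revert e₁ e₂ e₃; decide

def Reached : L3State → List (Bool × Bool) → Prop
  | start, u => u = []
  | dead, _ => True
  | A, u => ∃ a, 0 < a ∧ IsInkdotMarking u (blockWord a 0 0 0) ∅ 0
  | B₀, u => ReachedB 0 u
  | B₁, u => ReachedB 1 u
  | C₀, u => ReachedC 0 u
  | C₁, u => ReachedC 1 u
  | C₂, u => ReachedC 2 u
  | D₀, u => ReachedD 0 u
  | D₁, u => ReachedD 1 u
  | D₂, u => ReachedD 2 u
where
  ReachedB (j : ℕ) (u : List (Bool × Bool)) : Prop :=
    ∃ a b, 0 < a ∧ 0 < b ∧ IsInkdotMarking u (blockWord a b 0 0) {a} j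
  ReachedC (j : ℕ) (u : List (Bool × Bool)) : Prop :=
    ∃ a b c, 0 < a ∧ 0 < b ∧ 0 < c ∧ IsInkdotMarking u (blockWord a b c 0) {a + b, a} j
  ReachedD (j : ℕ) (u : List (Bool × Bool)) : Prop :=
    ∃ a b c d, 0 < a ∧ 0 < b ∧ 0 < c ∧ 0 < d ∧
      IsInkdotMarking u (blockWord a b c d) (blockBoundaries a b c) j

end L3State

def l3Automaton : DFA (Bool × Bool) L3State := ⟨L3State.step, .start, {.D₂}⟩

namespace L3State

open Reached

variable {u : List (Bool × Bool)} {j : ℕ}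

theorem reached_A_singleton : Reached A [(false, false)] :=
  ⟨1, one_pos, ∅, subset_rfl, rfl, by simp [markWord, blockWord]⟩

theorem reached_A_append (h : Reached A u) : Reached A (u ++ [(false, false)]) := by
  obtain ⟨a, ha, hu⟩ := h
  refine ⟨a + 1, by omega, ?_⟩
  simpa [blockWord, List.replicate_succ'] using hu.append_singleton (by simp) false

theorem reachedB_append_of_reached_A (h : Reached A u) (e : Bool) :
    ReachedB e.toNat (u ++ [(true, e)]) := by
  obtain ⟨a, ha, hu⟩ := h
  refine ⟨a, 1, ha, one_pos, ?_⟩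
  simpa [blockWord] using hu.append_singleton_insert (by simp) true e

theorem ReachedB.append (h : ReachedB j u) : ReachedB j (u ++ [(true, false)]) := by
  obtain ⟨a, b, ha, hb, hu⟩ := h
  refine ⟨a, b + 1, ha, by omega, ?_⟩
  simpa [blockWord, List.replicate_succ'] using hu.append_singleton (by simpa using hb) true

theorem ReachedB.append_reachedC (h : ReachedB j u) (e : Bool) :
    ReachedC (j + e.toNat) (u ++ [(false, e)]) := by
  obtain ⟨a, b, ha, hb, hu⟩ := h
  refine ⟨a, b, 1, ha, hb, one_pos, ?_⟩
  simpa [blockWord] using hu.append_singleton_insert (by simpa using hb) false e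

theorem ReachedC.append (h : ReachedC j u) : ReachedC j (u ++ [(false, false)]) := by
  obtain ⟨a, b, c, ha, hb, hc, hu⟩ := h
  refine ⟨a, b, c + 1, ha, hb, by omega, ?_⟩
  simpa [blockWord, List.replicate_succ'] using
    hu.append_singleton (by simp; omega) false

theorem ReachedC.append_reachedD (h : ReachedC j u) (e : Bool) :
    ReachedD (j + e.toNat) (u ++ [(true, e)]) := by
  obtain ⟨a, b, c, ha, hb, hc, hu⟩ := h
  refine ⟨a, b, c, 1, ha, hb, hc, one_pos, ?_⟩
  simpa [blockWord, blockBoundaries, Nat.add_assoc] using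
    hu.append_singleton_insert (by simp; omega) true e

theorem ReachedD.append (h : ReachedD j u) : ReachedD j (u ++ [(true, false)]) := by
  obtain ⟨a, b, c, d, ha, hb, hc, hd, hu⟩ := h
  refine ⟨a, b, c, d + 1, ha, hb, hc, by omega, ?_⟩
  simpa [blockWord, List.replicate_succ'] using
    hu.append_singleton (by simp [blockBoundaries]; omega) true

theorem reached_eval (u : List (Bool × Bool)) : Reached (l3Automaton.eval u) u := by
  induction u using List.reverseRecOn with
  | nil => rfl
  | append_singleton u x ih =>
    rw [DFA.eval_append_singleton]
    obtain ⟨s, e⟩ := x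
    generalize l3Automaton.eval u = q at ih
    cases q <;> cases s <;> cases e <;> simp only [l3Automaton, step, Reached] at ih ⊢ <;>
      first
        | trivial
        | (subst ih; exact reached_A_singleton)
        | exact reached_A_append ih
        | exact reachedB_append_of_reached_A ih _
        | exact ReachedB.append ih
        | exact ReachedC.append ih
        | exact ReachedD.append ih
        | exact ReachedB.append_reachedC ih false
        | exact ReachedB.append_reachedC ih true
        | exact ReachedC.append_reachedD ih false
        | exact ReachedC.append_reachedD ih true

end L3State

theorem l3Automaton_evalFrom_block (q : L3State) (x e : Bool) (n : ℕ) :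
    l3Automaton.evalFrom q ((x, e) :: List.replicate n (x, false)) = L3State.step q (x, e) := by
  rw [DFA.evalFrom_cons, DFA.evalFrom_replicate]
  exact Function.iterate_fixed (L3State.step_step_of_same_letter q x e) n

theorem markWord_blockWord_mem_accepts {a b c d : ℕ} (ha : 0 < a) (hb : 0 < b) (hc : 0 < c)
    (hd : 0 < d) {S : Finset ℕ} (hS : S ∈ (blockBoundaries a b c).powersetCard 2) :
    markWord (blockWord a b c d) S ∈ l3Automaton.accepts := by
  obtain ⟨hSB, hcard⟩ := Finset.mem_powersetCard.mp hS
  have hS' : ∀ i ∈ S, i = a + b + c ∨ i = a + b ∨ i = a := fun i hi => by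
    simpa [blockBoundaries] using hSB hi
  obtain ⟨a, rfl⟩ := Nat.exists_eq_add_one.mpr ha
  obtain ⟨b, rfl⟩ := Nat.exists_eq_add_one.mpr hb
  obtain ⟨c, rfl⟩ := Nat.exists_eq_add_one.mpr hc
  obtain ⟨d, rfl⟩ := Nat.exists_eq_add_one.mpr hd
  have hblocks : blockWord (a + 1) (b + 1) (c + 1) (d + 1) =
      (false :: List.replicate a false) ++ (true :: List.replicate b true) ++
        (false :: List.replicate c false) ++ (true :: List.replicate d true) := by
    simp [blockWord, List.replicate_succ]
  rw [DFA.mem_accepts, DFA.eval, hblocks, markWord_eq_markWordFrom]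
  simp only [markWordFrom_append, List.length_append, List.length_cons, List.length_replicate,
    zero_add]
  rw [markWordFrom_cons_replicate (fun i hi => by have := hS' i hi; omega),
    markWordFrom_cons_replicate (fun i hi => by have := hS' i hi; omega),
    markWordFrom_cons_replicate (fun i hi => by have := hS' i hi; omega),
    markWordFrom_cons_replicate (fun i hi => by have := hS' i hi; omega)]
  simp only [DFA.evalFrom_of_append, l3Automaton_evalFrom_block]
  have h0 : (0 ∈ S) = False := eq_false fun h => by have := hS' 0 h; omega
  have hsum : (decide (a + 1 ∈ S)).toNat + (decide (a + 1 + (b + 1) ∈ S)).toNat +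
      (decide (a + 1 + (b + 1) + (c + 1) ∈ S)).toNat = 2 := by
    rw [← hcard, Finset.card_eq_sum_toNat_decide_mem hSB, blockBoundaries,
      Finset.sum_insert (by simp; omega), Finset.sum_insert (by simp), Finset.sum_singleton]
    ring
  simp only [h0, decide_false]
  exact L3State.step_blocks_eq_D₂ _ _ _ hsum

theorem exists_blockWord_of_markWord_mem_accepts {w : List Bool} {T : Finset ℕ}
    (hT : ∀ i ∈ T, i < w.length) (h : markWord w T ∈ l3Automaton.accepts) :
    ∃ a b c d, 0 < a ∧ 0 < b ∧ 0 < c ∧ 0 < d ∧ w = blockWord a b c d ∧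
      T ∈ (blockBoundaries a b c).powersetCard 2 := by
  have hreached := L3State.reached_eval (markWord w T)
  rw [show l3Automaton.eval (markWord w T) = .D₂ from h] at hreached
  obtain ⟨a, b, c, d, ha, hb, hc, hd, S, hSB, hcard, hwS⟩ := hreached
  obtain rfl : w = blockWord a b c d := by
    simpa [map_fst_markWord] using congrArg (List.map Prod.fst) hwS
  have hS : ∀ i ∈ S, i < (blockWord a b c d).length := fun i hi => by
    have := hSB hi
    simp only [blockBoundaries, Finset.mem_insert, Finset.mem_singleton] at this
    simp only [length_blockWord]
    omega
  obtain rfl : T = S := Finset.ext fun i => by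
    by_cases hi : i < (blockWord a b c d).length
    · exact markWord_eq_markWord_iff.mp hwS i hi
    · exact iff_of_false (fun h => hi (hT i h)) fun h => hi (hS i h)
  exact ⟨a, b, c, d, ha, hb, hc, hd, rfl, Finset.mem_powersetCard.mpr ⟨hSB, hcard⟩⟩

theorem mem_L3_of_markWord_mem_accepts_of_ne {w : List Bool} {m : ℕ} (hm : 0 < m)
    (hw : w.length = 4 * m) {T T' : Finset ℕ} (hT : T ∈ (blockBoundaries m m m).powersetCard 2)
    (hT' : T' ∈ (blockBoundaries m m m).powersetCard 2) (hne : T ≠ T')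
    (hacc : markWord w T ∈ l3Automaton.accepts) (hacc' : markWord w T' ∈ l3Automaton.accepts) :
    w ∈ L3 := by
  have inRange : ∀ {T}, T ∈ (blockBoundaries m m m).powersetCard 2 → ∀ i ∈ T, i < w.length :=
    fun hT i hi => by
      have := (Finset.mem_powersetCard.mp hT).1 hi
      simp only [blockBoundaries, Finset.mem_insert, Finset.mem_singleton] at this
      omega
  obtain ⟨a, b, c, d, ha, hb, hc, hd, rfl, hTabc⟩ :=
    exists_blockWord_of_markWord_mem_accepts (inRange hT) hacc
  obtain ⟨a', b', c', d', -, hb', hc', hd', hw', hT'abc⟩ :=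
    exists_blockWord_of_markWord_mem_accepts (inRange hT') hacc'
  obtain ⟨rfl, rfl, rfl, rfl⟩ := blockWord_injective hb hc hd hb' hc' hd' hw'
  have hsub : blockBoundaries m m m ⊆ blockBoundaries a b c := by
    rw [← Finset.union_eq_of_mem_powersetCard (card_blockBoundaries hm hm) hT hT' hne]
    exact Finset.union_subset (Finset.mem_powersetCard.mp hTabc).1
      (Finset.mem_powersetCard.mp hT'abc).1
  simp only [blockBoundaries, Finset.insert_subset_iff, Finset.singleton_subset_iff,
    Finset.mem_insert, Finset.mem_singleton] at hsub
  rw [length_blockWord] at hw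
  obtain ⟨rfl, rfl, rfl, rfl⟩ : a = m ∧ b = m ∧ c = m ∧ d = m := by omega
  exact ⟨_, ha, rfl⟩

-- No word of a length other than `4m` with `m > 0` is in `L3`, and words without inkdots are
-- rejected.
def l3Advice (n : ℕ) : Finset (Finset ℕ) :=
  if n % 4 = 0 ∧ 0 < n then (blockBoundaries (n / 4) (n / 4) (n / 4)).powersetCard 2 else {∅}

theorem l3Advice_four_mul {m : ℕ} (hm : 0 < m) :
    l3Advice (4 * m) = (blockBoundaries m m m).powersetCard 2 := by
  rw [l3Advice, if_pos (by omega), Nat.mul_div_cancel_left m (by norm_num)]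

theorem l3Advice_of_not_exists {n : ℕ} (h : ¬ ∃ m, 0 < m ∧ n = 4 * m) : l3Advice n = {∅} :=
  if_neg fun h' => h ⟨n / 4, by omega, by omega⟩

theorem l3Advice_nonempty (n : ℕ) : (l3Advice n).Nonempty := by
  by_cases h : ∃ m, 0 < m ∧ n = 4 * m
  · obtain ⟨m, hm, rfl⟩ := h
    rw [l3Advice_four_mul hm, Finset.powersetCard_nonempty, card_blockBoundaries hm hm]
    omega
  · simp [l3Advice_of_not_exists h]

theorem forall_lt_and_card_le_of_mem_l3Advice {n : ℕ} {S : Finset ℕ} (hS : S ∈ l3Advice n) :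
    (∀ i ∈ S, i < n) ∧ S.card ≤ 2 := by
  by_cases h : ∃ m, 0 < m ∧ n = 4 * m
  · obtain ⟨m, hm, rfl⟩ := h
    rw [l3Advice_four_mul hm, Finset.mem_powersetCard] at hS
    refine ⟨fun i hi => ?_, hS.2.le⟩
    have := hS.1 hi
    simp only [blockBoundaries, Finset.mem_insert, Finset.mem_singleton] at this
    omega
  · simp_all [l3Advice_of_not_exists h]

open scoped Classical in
theorem three_mul_card_filter_markWord_mem_accepts_le {w : List Bool} (hw : w ∉ L3) :
    3 * ((l3Advice w.length).filter fun S => markWord w S ∈ l3Automaton.accepts).card ≤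
      (l3Advice w.length).card := by
  by_cases h : ∃ m, 0 < m ∧ w.length = 4 * m
  · obtain ⟨m, hm, hwm⟩ := h
    rw [hwm, l3Advice_four_mul hm, Finset.card_powersetCard, card_blockBoundaries hm hm]
    suffices ((Finset.powersetCard 2 (blockBoundaries m m m)).filter
        fun S => markWord w S ∈ l3Automaton.accepts).card ≤ 1 by simp; omega
    refine Finset.card_le_one.mpr fun T hT T' hT' => ?_
    rw [Finset.mem_filter] at hT hT'
    by_contra hne
    exact hw (mem_L3_of_markWord_mem_accepts_of_ne hm hwm hT.1 hT'.1 hne hT.2 hT'.2)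
  · have hrej : markWord w ∅ ∉ l3Automaton.accepts := fun hacc => by
      obtain ⟨_, _, _, _, _, _, _, _, _, hempty⟩ :=
        exists_blockWord_of_markWord_mem_accepts (by simp) hacc
      simp at hempty
    simp [l3Advice_of_not_exists h, Finset.filter_singleton, hrej]

open scoped Classical in
theorem l3Advice_majority (w : List Bool) : 2 * (l3Advice w.length).card ≤
    3 * ((l3Advice w.length).filter
      fun S => (markWord w S ∈ l3Automaton.accepts ↔ w ∈ L3)).card := by
  by_cases hw : w ∈ L3
  · obtain ⟨m, hm, hwm⟩ := id hw
    change w = blockWord m m m m at hwm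
    rw [hwm, length_blockWord, show m + m + m + m = 4 * m by ring, l3Advice_four_mul hm,
      Finset.filter_true_of_mem fun S hS =>
        iff_of_true (markWord_blockWord_mem_accepts hm hm hm hm hS) (hwm ▸ hw)]
    omega
  · have hsplit := Finset.card_filter_add_card_filter_not (s := l3Advice w.length)
      fun S => markWord w S ∈ l3Automaton.accepts
    have := three_mul_card_filter_markWord_mem_accepts_le hw
    simp only [hw, iff_false]
    omega

theorem L3_recognizedWithRandomInkdots : RecognizedWithRandomInkdots L3 2 :=
  recognizedWithRandomInkdots_of_uniformAdvice l3Automaton l3Advice l3Advice_nonempty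
    (fun _ _ => forall_lt_and_card_le_of_mem_l3Advice) l3Advice_majority

/-- `REG/2(⊙) ⊊ REG/R2(⊙)` over the alphabet `{0,1}`, witnessed by `L_3`. -/
theorem randomized_two_inkdots_strictly_stronger :
    (∀ L : Set (List Bool),
        RecognizedWithInkdots L (fun _ => 2) → RecognizedWithRandomInkdots L 2) ∧
    RecognizedWithRandomInkdots L3 2 ∧
    ¬ RecognizedWithInkdots L3 (fun _ => 2) :=
  ⟨fun _ h => h.recognizedWithRandomInkdots, L3_recognizedWithRandomInkdots,
    L3_not_recognizedWithInkdots⟩
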